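/- (Loosened random coding union bound, constant Lee weight channel, minimum distance decoding.) Let q ≥ 2, n ≥ 1, M ≥ 2 be integers, let t be an integer with 0 < t < n⌊q/2⌋, and set δ = t/n and R₂ = (log₂ M)/n. Fix any y ∈ Z_q^n and let X̃_2, …, X̃_M be independent random vectors, each uniformly distributed on Z_q^n. Then P(∃ j ∈ {2,…,M} : w_L(y − X̃_j) ≤ t) ≤ 2^{−n [log₂ q − H_δ⁺ − R₂]⁺}. -/
import Mathlib


/-- The Lee weight of the residue `i ∈ {0,…,q-1}` is `min(i, q-i)`. -/
def leeW (q i : ℕ) : ℕ := min i (q - i)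

/-- The Lee weight of a vector over `Z_q`. -/
def leeWtV {q n : ℕ} (x : Fin n → ZMod q) : ℕ :=
  ∑ k, min (x k).val (q - (x k).val)

/-- `Σ_{i∈Z_q} w_L(i) e^{-β w_L(i)}`. -/
noncomputable def numFun (q : ℕ) (β : ℝ) : ℝ :=
  ∑ i ∈ Finset.range q, (leeW q i : ℝ) * Real.exp (-β * (leeW q i : ℝ))

/-- The normalization constant `Z(β) = Σ_{i∈Z_q} e^{-β w_L(i)}`. -/
noncomputable def Zfun (q : ℕ) (β : ℝ) : ℝ :=
  ∑ i ∈ Finset.range q, Real.exp (-β * (leeW q i : ℝ))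

/-- The Boltzmann pmf on `Z_q` with parameter `β`. -/
noncomputable def boltz (q : ℕ) (β : ℝ) (i : ℕ) : ℝ :=
  Real.exp (-β * (leeW q i : ℝ)) / Zfun q β

/-- Shannon entropy (base 2) of the Boltzmann distribution with parameter `β`. -/
noncomputable def entB (q : ℕ) (β : ℝ) : ℝ :=
  -∑ i ∈ Finset.range q, boltz q β i * Real.logb 2 (boltz q β i)

/-- `δ_q`, the mean Lee weight of a uniform element of `Z_q`. -/
noncomputable def deltaQ (q : ℕ) : ℝ :=
  if q % 2 = 0 then (q : ℝ) / 4 else ((q : ℝ) ^ 2 - 1) / (4 * q)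

lemma sumLee : ∀ q : ℕ, ∑ i ∈ Finset.range q, leeW q i = q * q / 4
  | 0 => rfl
  | 1 => rfl
  | (q+2) => by
      have ih := sumLee q
      have hmid : ∑ j ∈ Finset.range q, leeW (q+2) (j+1)
          = (∑ j ∈ Finset.range q, leeW q j) + q := by
        rw [Finset.sum_congr rfl (fun j hj => show leeW (q+2) (j+1) = leeW q j + 1 by
          simp only [Finset.mem_range] at hj; unfold leeW; omega)]
        rw [Finset.sum_add_distrib]
        simp
      have h2 : ∑ i ∈ Finset.range (q+2), leeW (q+2) i
          = leeW (q+2) 0 + (∑ j ∈ Finset.range q, leeW (q+2) (j+1)) + leeW (q+2) (q+1) := by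
        rw [Finset.sum_range_succ, Finset.sum_range_succ']
        ring
      have h3 : leeW (q+2) 0 = 0 := by unfold leeW; omega
      have h4 : leeW (q+2) (q+1) = 1 := by unfold leeW; omega
      rw [h2, hmid, ih, h3, h4]
      have hexp : (q+2)*(q+2) = q*q + 4*q + 4 := by ring
      omega

lemma sumLeeReal (q : ℕ) (hq : 1 ≤ q) :
    ∑ i ∈ Finset.range q, (leeW q i : ℝ) = q * deltaQ q := by
  have h := sumLee q
  have hcast : (∑ i ∈ Finset.range q, (leeW q i : ℝ)) = ((q*q/4 : ℕ) : ℝ) := by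
    rw [← h]; push_cast; rfl
  rw [hcast]
  have hq0 : (q : ℝ) ≠ 0 := by positivity
  unfold deltaQ
  by_cases hpar : q % 2 = 0
  · simp only [if_pos hpar]
    obtain ⟨k, hk⟩ : 2 ∣ q := Nat.dvd_of_mod_eq_zero hpar
    subst hk
    have : 2 * k * (2 * k) / 4 = k * k := by
      have : 2 * k * (2 * k) = 4 * (k * k) := by ring
      omega
    rw [this]
    push_cast
    ring
  · simp only [if_neg hpar]
    have hmod : q * q % 4 = 1 := by
      have : q % 2 = 1 := by omega
      obtain ⟨k, hk⟩ : ∃ k, q = 2 * k + 1 := ⟨q / 2, by omega⟩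
      subst hk
      have : (2*k+1) * (2*k+1) = 4 * (k*k+k) + 1 := by ring
      omega
    have hdm : q * q = 4 * (q * q / 4) + 1 := by omega
    have : ((q * q / 4 : ℕ) : ℝ) = ((q:ℝ) * q - 1) / 4 := by
      have := congrArg (Nat.cast (R := ℝ)) hdm
      push_cast at this
      linarith
    rw [this]
    field_simp

lemma Zfun_pos (q : ℕ) (hq : 1 ≤ q) (β : ℝ) : 0 < Zfun q β := by
  apply Finset.sum_pos (fun i _ => Real.exp_pos _)
  exact Finset.nonempty_range_iff.mpr (by omega)

lemma beta_nonneg (q : ℕ) (hq : 2 ≤ q) (β δ : ℝ)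
    (hβ : numFun q β = δ * Zfun q β) (hδq : δ ≤ deltaQ q) : 0 ≤ β := by
  by_contra hneg
  push_neg at hneg
  set w : ℕ → ℝ := fun i => (leeW q i : ℝ) with hw
  set e : ℕ → ℝ := fun i => Real.exp (-β * w i) with he
  set R := Finset.range q
  have hmono : ∀ i j, w j ≤ w i → e j ≤ e i := by
    intro i j hij
    apply Real.exp_le_exp.mpr
    nlinarith
  have hterm : ∀ i j, 0 ≤ (w i - w j) * (e i - e j) := by
    intro i j
    rcases le_total (w j) (w i) with h | h
    · have := hmono i j h; nlinarith
    · have := hmono j i h; nlinarith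
  have hpos : 0 < ∑ i ∈ R, ∑ j ∈ R, (w i - w j) * (e i - e j) := by
    apply Finset.sum_pos'
    · intro i _; exact Finset.sum_nonneg fun j _ => hterm i j
    · refine ⟨1, Finset.mem_range.mpr (by omega), ?_⟩
      apply Finset.sum_pos'
      · intro j _; exact hterm 1 j
      · refine ⟨0, Finset.mem_range.mpr (by omega), ?_⟩
        have hw1 : w 1 = 1 := by
          simp [hw, leeW]
          omega
        have hw0 : w 0 = 0 := by simp [hw, leeW]
        have he0 : e 0 = 1 := by simp [he, hw0]
        have he1 : e 1 = Real.exp (-β) := by simp [he, hw1]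
        have : 1 < Real.exp (-β) := by
          have := Real.exp_lt_exp.mpr (show (0:ℝ) < -β by linarith)
          simpa using this
        rw [hw1, hw0, he0, he1]
        nlinarith
  have hexpand : ∑ i ∈ R, ∑ j ∈ R, (w i - w j) * (e i - e j)
      = 2 * ((q : ℝ) * numFun q β - (∑ i ∈ R, w i) * Zfun q β) := by
    have h1 : ∀ i j, (w i - w j) * (e i - e j)
        = (w i * e i + w j * e j) - (w i * e j + w j * e i) := fun i j => by ring
    simp only [h1]
    have hinner : ∀ i, ∑ j ∈ R, (w i * e i + w j * e j - (w i * e j + w j * e i))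
        = (q : ℝ) * (w i * e i) + numFun q β - (w i * Zfun q β + (∑ k ∈ R, w k) * e i) := by
      intro i
      rw [Finset.sum_sub_distrib, Finset.sum_add_distrib, Finset.sum_add_distrib,
        Finset.sum_const, Finset.card_range, ← Finset.mul_sum, ← Finset.sum_mul,
        nsmul_eq_mul]
      rfl
    rw [Finset.sum_congr rfl (fun i _ => hinner i)]
    rw [Finset.sum_sub_distrib, Finset.sum_add_distrib, Finset.sum_add_distrib,
      Finset.sum_const, Finset.card_range, ← Finset.mul_sum, ← Finset.sum_mul,
      ← Finset.mul_sum, nsmul_eq_mul]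
    have hN : ∑ i ∈ R, w i * e i = numFun q β := rfl
    have hZ : ∑ i ∈ R, e i = Zfun q β := rfl
    rw [hN, hZ]
    ring
  have hS : ∑ i ∈ R, w i = q * deltaQ q := sumLeeReal q (by omega)
  have hZpos := Zfun_pos q (by omega) β
  rw [hexpand, hS, hβ] at hpos
  have hq0 : (0:ℝ) < q := by positivity
  have hmul : δ * Zfun q β ≤ deltaQ q * Zfun q β := mul_le_mul_of_nonneg_right hδq hZpos.le
  nlinarith [mul_le_mul_of_nonneg_left hmul hq0.le]

lemma entB_eq (q : ℕ) (hq : 2 ≤ q) (β δ : ℝ) (hβ : numFun q β = δ * Zfun q β) :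
    entB q β = δ * β / Real.log 2 + Real.logb 2 (Zfun q β) := by
  have hZ := Zfun_pos q (by omega) β
  set w : ℕ → ℝ := fun i => (leeW q i : ℝ) with hw
  set e : ℕ → ℝ := fun i => Real.exp (-β * w i) with he
  set R := Finset.range q
  set Z := Zfun q β
  have hpt : ∀ i ∈ R, boltz q β i * Real.logb 2 (boltz q β i)
      = (w i * e i) * (-β / (Z * Real.log 2)) - e i * (Real.logb 2 Z / Z) := by
    intro i _
    have hb : boltz q β i = e i / Z := rfl
    have hlogb : Real.logb 2 (boltz q β i) = (-β * w i) / Real.log 2 - Real.logb 2 Z := by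
      rw [hb, Real.logb, Real.log_div (Real.exp_ne_zero _) hZ.ne', Real.log_exp, sub_div,
        Real.logb]
    rw [hb] at hlogb ⊢; rw [hlogb]
    ring
  have hlog2 : Real.log 2 ≠ 0 := by
    have := Real.log_pos one_lt_two; linarith
  unfold entB
  rw [Finset.sum_congr rfl hpt, Finset.sum_sub_distrib, ← Finset.sum_mul, ← Finset.sum_mul]
  have hN : ∑ i ∈ R, w i * e i = numFun q β := rfl
  have hZs : ∑ i ∈ R, e i = Z := rfl
  rw [hN, hZs, hβ]
  field_simp
  ring

lemma ball_bound (q n t : ℕ) [NeZero q] (β : ℝ) (hβ : 0 ≤ β) :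
    ((Finset.univ.filter (fun u : Fin n → ZMod q => leeWtV u ≤ t)).card : ℝ)
      ≤ Real.exp (β * t) * (Zfun q β) ^ n := by
  classical
  have hstep1 : ((Finset.univ.filter (fun u : Fin n → ZMod q => leeWtV u ≤ t)).card : ℝ)
      ≤ ∑ u : Fin n → ZMod q, Real.exp (β * t) * Real.exp (-β * (leeWtV u : ℝ)) := by
    rw [Finset.card_eq_sum_ones, Nat.cast_sum]
    refine le_trans (Finset.sum_le_sum ?_)
      (Finset.sum_le_sum_of_subset_of_nonneg (Finset.filter_subset _ _)
        (fun _ _ _ => by positivity))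
    intro u hu
    simp only [Finset.mem_filter] at hu
    rw [Nat.cast_one, ← Real.exp_add]
    refine Real.one_le_exp ?_
    have : (leeWtV u : ℝ) ≤ t := by exact_mod_cast hu.2
    nlinarith
  rw [← Finset.mul_sum] at hstep1
  refine hstep1.trans (mul_le_mul_of_nonneg_left (le_of_eq ?_) (Real.exp_pos _).le)
  have hfac : ∀ u : Fin n → ZMod q, Real.exp (-β * (leeWtV u : ℝ))
      = ∏ k, Real.exp (-β * (min (u k).val (q - (u k).val) : ℕ)) := by
    intro u
    rw [← Real.exp_sum]
    congr 1
    unfold leeWtV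
    rw [Nat.cast_sum, Finset.mul_sum]
  have hone : ∑ v : ZMod q, Real.exp (-β * (min v.val (q - v.val) : ℕ)) = Zfun q β := by
    unfold Zfun
    refine Finset.sum_bij' (fun (v : ZMod q) _ => v.val) (fun i _ => (i : ZMod q))
      ?_ ?_ ?_ ?_ ?_
    · intro v _; exact Finset.mem_range.mpr (ZMod.val_lt v)
    · intro i _; exact Finset.mem_univ _
    · intro v _; exact ZMod.natCast_rightInverse v
    · intro i hi; exact ZMod.val_cast_of_lt (Finset.mem_range.mp hi)
    · intro v _; rfl
  calc ∑ u : Fin n → ZMod q, Real.exp (-β * (leeWtV u : ℝ))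
      = ∑ u ∈ Fintype.piFinset (fun _ : Fin n => (Finset.univ : Finset (ZMod q))),
        ∏ k, Real.exp (-β * (min (u k).val (q - (u k).val) : ℕ)) := by
        rw [Fintype.piFinset_univ]
        exact Finset.sum_congr rfl (fun u _ => hfac u)
    _ = ∏ _k : Fin n, ∑ v : ZMod q, Real.exp (-β * (min v.val (q - v.val) : ℕ)) := by
        rw [Finset.prod_univ_sum]
    _ = (Zfun q β) ^ n := by
        rw [Finset.prod_congr rfl (fun k _ => hone), Finset.prod_const, Finset.card_univ,
          Fintype.card_fin]

lemma count_bound (q n t m : ℕ) [NeZero q] (y : Fin n → ZMod q) :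
    Nat.card {X : Fin m → Fin n → ZMod q // ∃ j, leeWtV (y - X j) ≤ t}
      ≤ m * (Finset.univ.filter (fun u : Fin n → ZMod q => leeWtV u ≤ t)).card
          * ((q ^ n) ^ (m - 1)) := by
  classical
  have hcardV : Fintype.card (Fin n → ZMod q) = q ^ n := by
    simp [ZMod.card]
  have hBall : Fintype.card {v : Fin n → ZMod q // leeWtV (y - v) ≤ t}
      = (Finset.univ.filter (fun u : Fin n → ZMod q => leeWtV u ≤ t)).card := by
    have e0 : {v : Fin n → ZMod q // leeWtV (y - v) ≤ t}
        ≃ {u : Fin n → ZMod q // leeWtV u ≤ t} :=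
      (Equiv.subLeft y).subtypeEquiv (fun v => Iff.rfl)
    rw [Fintype.card_congr e0]
    exact Fintype.card_subtype _
  rw [Nat.card_eq_fintype_card, Fintype.card_subtype]
  have hsub : (Finset.univ.filter (fun X : Fin m → Fin n → ZMod q => ∃ j, leeWtV (y - X j) ≤ t))
      ⊆ Finset.univ.biUnion (fun j : Fin m =>
          Finset.univ.filter (fun X : Fin m → Fin n → ZMod q => leeWtV (y - X j) ≤ t)) := by
    intro X hX
    simp only [Finset.mem_filter, Finset.mem_univ, true_and] at hX
    obtain ⟨j, hj⟩ := hX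
    simp only [Finset.mem_biUnion, Finset.mem_filter, Finset.mem_univ, true_and]
    exact ⟨j, hj⟩
  refine le_trans (Finset.card_le_card hsub) (le_trans (Finset.card_biUnion_le) ?_)
  have hjcard : ∀ j : Fin m,
      (Finset.univ.filter (fun X : Fin m → Fin n → ZMod q => leeWtV (y - X j) ≤ t)).card
        = (Finset.univ.filter (fun u : Fin n → ZMod q => leeWtV u ≤ t)).card * (q ^ n) ^ (m - 1) := by
    intro j
    rw [← Fintype.card_subtype]
    have e1 : {X : Fin m → Fin n → ZMod q // leeWtV (y - X j) ≤ t}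
        ≃ {v : Fin n → ZMod q // leeWtV (y - v) ≤ t}
          × ({k : Fin m // k ≠ j} → Fin n → ZMod q) :=
      ((Equiv.funSplitAt j (Fin n → ZMod q)).subtypeEquiv
          (q := fun s => leeWtV (y - s.1) ≤ t) (fun X => by rw [Equiv.funSplitAt_apply])).trans
        (Equiv.prodSubtypeFstEquivSubtypeProd (p := fun v => leeWtV (y - v) ≤ t))
    rw [Fintype.card_congr e1, Fintype.card_prod, Fintype.card_fun, hBall, hcardV]
    congr 2
    rw [Fintype.card_subtype_compl, Fintype.card_subtype_eq, Fintype.card_fin]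
  rw [Finset.sum_congr rfl (fun j _ => hjcard j), Finset.sum_const, Finset.card_univ,
    Fintype.card_fin, smul_eq_mul, mul_assoc]

/-- Loosened random coding union bound for the constant Lee weight channel
under minimum distance decoding: the probability that some of `M-1` i.i.d.
uniform competing codewords is at Lee distance at most `t` from `y` is at most
`2^{-n [log₂ q - H_δ⁺ - R₂]⁺}` with `δ = t/n`. -/
theorem stmt9 (q n M t : ℕ) [NeZero q] (hq : 2 ≤ q) (hn : 1 ≤ n) (hM : 2 ≤ M)
    (ht0 : 0 < t) (ht1 : t < n * (q / 2))
    (δ β : ℝ) (hδ : δ = (t : ℝ) / n)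
    (hβ : numFun q β = δ * Zfun q β) (y : Fin n → ZMod q) :
    (Nat.card {X : Fin (M - 1) → Fin n → ZMod q // ∃ j, leeWtV (y - X j) ≤ t} : ℝ)
        / (q : ℝ) ^ (n * (M - 1))
      ≤ 2 ^ (-(n : ℝ) * max 0 (Real.logb 2 q
          - (if δ ≤ deltaQ q then entB q β else Real.logb 2 q) - Real.logb 2 M / n)) := by
  classical
  have hn0 : (0:ℝ) < n := by exact_mod_cast hn
  have hq0 : (0:ℝ) < q := by positivity
  have hq1 : (1:ℝ) < q := by exact_mod_cast hq
  have hM0 : (0:ℝ) < M := by positivity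
  have hqpow : (0:ℝ) < (q:ℝ) ^ (n * (M-1)) := by positivity
  obtain ⟨m', hm'⟩ : ∃ m', M - 1 = m' + 1 := ⟨M - 2, by omega⟩
  -- generic bound: LHS ≤ 1
  have hcount_le : Nat.card {X : Fin (M - 1) → Fin n → ZMod q // ∃ j, leeWtV (y - X j) ≤ t}
      ≤ q ^ (n * (M-1)) := by
    rw [Nat.card_eq_fintype_card]
    refine le_trans (Fintype.card_subtype_le _) (le_of_eq ?_)
    simp [ZMod.card, ← pow_mul, mul_comm]
  have hLHS1 : (Nat.card {X : Fin (M - 1) → Fin n → ZMod q // ∃ j, leeWtV (y - X j) ≤ t} : ℝ)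
      / (q : ℝ) ^ (n * (M - 1)) ≤ 1 := by
    rw [div_le_one hqpow]
    exact_mod_cast hcount_le
  by_cases hcase : δ ≤ deltaQ q
  · rw [if_pos hcase]
    set E := Real.logb 2 q - entB q β - Real.logb 2 M / n with hE
    rcases le_or_gt E 0 with hE0 | hE0
    · rw [max_eq_left hE0, mul_zero, Real.rpow_zero]
      exact hLHS1
    · rw [max_eq_right hE0.le]
      have hβpos : 0 ≤ β := beta_nonneg q hq β δ hβ hcase
      have hZ := Zfun_pos q (le_trans one_le_two hq) β
      have hent : entB q β = δ * β / Real.log 2 + Real.logb 2 (Zfun q β) :=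
        entB_eq q hq β δ hβ
      have hlog2 : Real.log 2 ≠ 0 := by
        have := Real.log_pos one_lt_two; linarith
      have hδn : δ * n = t := by rw [hδ]; field_simp
      -- identify the RHS
      have hexpE : -(n:ℝ) * E = (β * t / Real.log 2)
          + (Real.logb 2 (Zfun q β) * n) + Real.logb 2 M + (-(Real.logb 2 q * n)) := by
        rw [hE, hent]
        have h1 : (n:ℝ) * (δ * β / Real.log 2) = β * t / Real.log 2 := by
          rw [← hδn]; ring
        have h2 : (n:ℝ) * (Real.logb 2 M / n) = Real.logb 2 M := by
          field_simp
        linear_combination h1 + h2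
      have f1 : (2:ℝ) ^ (β * (t:ℝ) / Real.log 2) = Real.exp (β * t) := by
        rw [Real.rpow_def_of_pos two_pos]
        congr 1
        field_simp
      have f2 : (2:ℝ) ^ (Real.logb 2 (Zfun q β) * (n:ℝ)) = (Zfun q β) ^ n := by
        rw [Real.rpow_mul (by norm_num), Real.rpow_logb two_pos (by norm_num) hZ,
          Real.rpow_natCast]
      have f3 : (2:ℝ) ^ (Real.logb 2 (M:ℝ)) = M :=
        Real.rpow_logb two_pos (by norm_num) hM0
      have f4 : (2:ℝ) ^ (-(Real.logb 2 (q:ℝ) * (n:ℝ))) = ((q:ℝ) ^ n)⁻¹ := by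
        rw [Real.rpow_neg (by norm_num), Real.rpow_mul (by norm_num),
          Real.rpow_logb two_pos (by norm_num) hq0, Real.rpow_natCast]
      have hRHS : (2:ℝ) ^ (-(n:ℝ) * E)
          = Real.exp (β * t) * (Zfun q β) ^ n * M * ((q:ℝ) ^ n)⁻¹ := by
        rw [hexpE, Real.rpow_add two_pos, Real.rpow_add two_pos, Real.rpow_add two_pos,
          f1, f2, f3, f4]
      rw [hRHS]
      -- main chain
      have hcb := count_bound q n t (M-1) y
      have hbb := ball_bound q n t β hβpos
      set Bc := (Finset.univ.filter (fun u : Fin n → ZMod q => leeWtV u ≤ t)).card with hBc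
      have hnum : (Nat.card {X : Fin (M - 1) → Fin n → ZMod q // ∃ j, leeWtV (y - X j) ≤ t} : ℝ)
          ≤ (M:ℝ) * (Real.exp (β * t) * (Zfun q β) ^ n) * ((q:ℝ) ^ n) ^ (M - 1 - 1) := by
        have h1 : (Nat.card {X : Fin (M - 1) → Fin n → ZMod q // ∃ j, leeWtV (y - X j) ≤ t} : ℝ)
            ≤ ((M-1 : ℕ) : ℝ) * (Bc : ℝ) * ((q:ℝ) ^ n) ^ (M - 1 - 1) := by
          have := hcb
          have : (Nat.card {X : Fin (M - 1) → Fin n → ZMod q // ∃ j, leeWtV (y - X j) ≤ t} : ℝ)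
              ≤ (((M-1) * Bc * ((q ^ n) ^ (M - 1 - 1)) : ℕ) : ℝ) := by exact_mod_cast this
          refine this.trans (le_of_eq ?_)
          push_cast
          ring
        refine h1.trans ?_
        have hM1 : ((M-1 : ℕ) : ℝ) ≤ (M:ℝ) := by
          have : M - 1 ≤ M := Nat.sub_le _ _
          exact_mod_cast this
        gcongr
      have hpow : (q:ℝ) ^ (n*(M-1)) = (q:ℝ)^n * ((q:ℝ)^n) ^ (M - 1 - 1) := by
        rw [hm', Nat.add_sub_cancel, ← pow_mul, ← pow_add]
        congr 1
        ring
      rw [div_le_iff₀ hqpow, hpow]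
      calc (Nat.card {X : Fin (M - 1) → Fin n → ZMod q // ∃ j, leeWtV (y - X j) ≤ t} : ℝ)
          ≤ (M:ℝ) * (Real.exp (β * t) * (Zfun q β) ^ n) * ((q:ℝ) ^ n) ^ (M - 1 - 1) := hnum
        _ = Real.exp (β * t) * (Zfun q β) ^ n * M * ((q:ℝ) ^ n)⁻¹
            * ((q:ℝ)^n * ((q:ℝ)^n) ^ (M - 1 - 1)) := by
            field_simp
  · rw [if_neg hcase]
    have hlogM : 0 ≤ Real.logb 2 M := by
      apply Real.logb_nonneg one_lt_two
      exact_mod_cast le_trans one_le_two hM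
    have hE0 : Real.logb 2 q - Real.logb 2 q - Real.logb 2 M / n ≤ 0 := by
      have : 0 ≤ Real.logb 2 M / n := by positivity
      linarith
    rw [max_eq_left hE0, mul_zero, Real.rpow_zero]
    exact hLHS1
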